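/- arXiv:1309.0562 — 9 statements merged into one kernel-verified Lean document; each statement's English description precedes it below -/
import Mathlib

section
/- Let R be a unital (not necessarily commutative) ring, and let n₁, n₂, n₃ be index types. Let X be a 3×3 block matrix with blocks X_{ij} : Matrix n_i n_j R for i,j ∈ {1,2,3}. Assume the block X₂₂ is invertible and that S := X₁₁ − X₁₂ X₂₂⁻¹ X₂₁ is invertible. Then the 2×2 block corner W := fromBlocks X₁₁ X₁₂ X₂₁ X₂₂ (a matrix indexed by n₁ ⊕ n₂) is invertible, and the Schur complement of X with respect to W equals the iterated Schur complement obtained by first eliminating X₂₂ and then eliminating the resulting (1,1) block S; explicitly: X₃₃ − [X₃₁ X₃₂] · W⁻¹ · [X₁₃; X₂₃] = (X₃₃ − X₃₂ X₂₂⁻¹ X₂₃) − (X₃₁ − X₃₂ X₂₂⁻¹ X₂₁) · S⁻¹ · (X₁₃ − X₁₂ X₂₂⁻¹ X₂₃). -/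
set_option maxHeartbeats 1000000
open Matrix

/-- Successive Schur complementation: eliminating the 2×2 corner
`W = fromBlocks X₁₁ X₁₂ X₂₁ X₂₂` of a 3×3 block matrix in one sweep agrees with
first eliminating `X₂₂` and then eliminating the resulting `(1,1)` block
`S = X₁₁ − X₁₂ X₂₂⁻¹ X₂₁`; moreover `W` is invertible. -/
theorem schur_complement_iterated_eliminate_22_then_11
    {R : Type*} [Ring R]
    {n₁ n₂ n₃ : Type*} [Fintype n₁] [Fintype n₂] [DecidableEq n₁] [DecidableEq n₂]
    (X₁₁ : Matrix n₁ n₁ R) (X₁₂ : Matrix n₁ n₂ R) (X₁₃ : Matrix n₁ n₃ R)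
    (X₂₁ : Matrix n₂ n₁ R) (X₂₂ : Matrix n₂ n₂ R) (X₂₃ : Matrix n₂ n₃ R)
    (X₃₁ : Matrix n₃ n₁ R) (X₃₂ : Matrix n₃ n₂ R) (X₃₃ : Matrix n₃ n₃ R)
    (h22 : IsUnit X₂₂)
    (hS : IsUnit (X₁₁ - X₁₂ * Ring.inverse X₂₂ * X₂₁)) :
    IsUnit (fromBlocks X₁₁ X₁₂ X₂₁ X₂₂) ∧
    X₃₃ - fromCols X₃₁ X₃₂ * Ring.inverse (fromBlocks X₁₁ X₁₂ X₂₁ X₂₂) *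
        fromRows X₁₃ X₂₃ =
      (X₃₃ - X₃₂ * Ring.inverse X₂₂ * X₂₃) -
        (X₃₁ - X₃₂ * Ring.inverse X₂₂ * X₂₁) *
          Ring.inverse (X₁₁ - X₁₂ * Ring.inverse X₂₂ * X₂₁) *
          (X₁₃ - X₁₂ * Ring.inverse X₂₂ * X₂₃) := by
  obtain ⟨i22⟩ := h22.nonempty_invertible
  rw [Ring.inverse_invertible] at hS
  obtain ⟨iS⟩ := hS.nonempty_invertible
  set S : Matrix n₁ n₁ R := X₁₁ - X₁₂ * ⅟X₂₂ * X₂₁ with hSdef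
  set V : Matrix (n₁ ⊕ n₂) (n₁ ⊕ n₂) R :=
    fromBlocks (⅟S) (-(⅟S * X₁₂ * ⅟X₂₂)) (-(⅟X₂₂ * X₂₁ * ⅟S))
      (⅟X₂₂ + ⅟X₂₂ * X₂₁ * ⅟S * X₁₂ * ⅟X₂₂) with hVdef
  have hS1 : X₁₁ * ⅟S - X₁₂ * ⅟X₂₂ * X₂₁ * ⅟S = 1 := by
    rw [← Matrix.sub_mul, ← hSdef, mul_invOf_self]
  have hS2 : ⅟S * X₁₁ - ⅟S * (X₁₂ * ⅟X₂₂ * X₂₁) = 1 := by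
    rw [← Matrix.mul_sub, ← hSdef, invOf_mul_self]
  have hWV : fromBlocks X₁₁ X₁₂ X₂₁ X₂₂ * V = 1 := by
    rw [hVdef, fromBlocks_multiply, ← fromBlocks_one, fromBlocks_inj]
    refine ⟨?_, ?_, ?_, ?_⟩
    · calc X₁₁ * ⅟S + X₁₂ * -(⅟X₂₂ * X₂₁ * ⅟S)
          = X₁₁ * ⅟S - X₁₂ * ⅟X₂₂ * X₂₁ * ⅟S := by
            simp [Matrix.mul_neg, sub_eq_add_neg, Matrix.mul_assoc]
        _ = 1 := hS1
    · calc X₁₁ * -(⅟S * X₁₂ * ⅟X₂₂) + X₁₂ * (⅟X₂₂ + ⅟X₂₂ * X₂₁ * ⅟S * X₁₂ * ⅟X₂₂)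
          = -((X₁₁ * ⅟S - X₁₂ * ⅟X₂₂ * X₂₁ * ⅟S) * (X₁₂ * ⅟X₂₂)) + X₁₂ * ⅟X₂₂ := by
            simp only [Matrix.neg_mul, Matrix.mul_neg, Matrix.add_mul, Matrix.mul_add,
              Matrix.mul_sub, Matrix.sub_mul, Matrix.mul_assoc]
            abel
        _ = 0 := by rw [hS1, Matrix.one_mul]; simp
    · have h : X₂₂ * (⅟X₂₂ * X₂₁ * ⅟S) = X₂₁ * ⅟S := by
        rw [← Matrix.mul_assoc, ← Matrix.mul_assoc, mul_invOf_self, Matrix.one_mul]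
      rw [Matrix.mul_neg, h]
      simp
    · calc X₂₁ * -(⅟S * X₁₂ * ⅟X₂₂) + X₂₂ * (⅟X₂₂ + ⅟X₂₂ * X₂₁ * ⅟S * X₁₂ * ⅟X₂₂)
          = -(X₂₁ * (⅟S * X₁₂ * ⅟X₂₂)) + (X₂₂ * ⅟X₂₂ + X₂₂ * ⅟X₂₂ * (X₂₁ * ⅟S * X₁₂ * ⅟X₂₂)) := by
            simp only [Matrix.neg_mul, Matrix.mul_neg, Matrix.add_mul, Matrix.mul_add,
              Matrix.mul_sub, Matrix.sub_mul, Matrix.mul_assoc]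
        _ = 1 := by rw [mul_invOf_self, Matrix.one_mul]; simp [Matrix.mul_neg, Matrix.mul_assoc]
  have hVW : V * fromBlocks X₁₁ X₁₂ X₂₁ X₂₂ = 1 := by
    rw [hVdef, fromBlocks_multiply, ← fromBlocks_one, fromBlocks_inj]
    refine ⟨?_, ?_, ?_, ?_⟩
    · calc ⅟S * X₁₁ + -(⅟S * X₁₂ * ⅟X₂₂) * X₂₁
          = ⅟S * X₁₁ - ⅟S * (X₁₂ * ⅟X₂₂ * X₂₁) := by
            simp [Matrix.neg_mul, sub_eq_add_neg, Matrix.mul_assoc]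
        _ = 1 := hS2
    · calc ⅟S * X₁₂ + -(⅟S * X₁₂ * ⅟X₂₂) * X₂₂
          = ⅟S * X₁₂ - ⅟S * (X₁₂ * (⅟X₂₂ * X₂₂)) := by
            simp [Matrix.neg_mul, sub_eq_add_neg, Matrix.mul_assoc]
        _ = 0 := by rw [invOf_mul_self, Matrix.mul_one, sub_self]
    · calc -(⅟X₂₂ * X₂₁ * ⅟S) * X₁₁ + (⅟X₂₂ + ⅟X₂₂ * X₂₁ * ⅟S * X₁₂ * ⅟X₂₂) * X₂₁
          = ⅟X₂₂ * X₂₁ - ⅟X₂₂ * (X₂₁ * (⅟S * X₁₁ - ⅟S * (X₁₂ * ⅟X₂₂ * X₂₁))) := by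
            simp only [Matrix.neg_mul, Matrix.mul_neg, Matrix.add_mul, Matrix.mul_add,
              Matrix.mul_sub, Matrix.sub_mul, Matrix.mul_assoc]
            abel
        _ = 0 := by rw [hS2, Matrix.mul_one, sub_self]
    · calc -(⅟X₂₂ * X₂₁ * ⅟S) * X₁₂ + (⅟X₂₂ + ⅟X₂₂ * X₂₁ * ⅟S * X₁₂ * ⅟X₂₂) * X₂₂
          = -(⅟X₂₂ * (X₂₁ * (⅟S * X₁₂))) + (⅟X₂₂ * X₂₂ + ⅟X₂₂ * (X₂₁ * (⅟S * (X₁₂ * (⅟X₂₂ * X₂₂))))) := by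
            simp only [Matrix.neg_mul, Matrix.mul_neg, Matrix.add_mul, Matrix.mul_add,
              Matrix.mul_sub, Matrix.sub_mul, Matrix.mul_assoc]
        _ = 1 := by rw [invOf_mul_self, Matrix.mul_one]; simp [Matrix.mul_assoc]
  letI iW : Invertible (fromBlocks X₁₁ X₁₂ X₂₁ X₂₂) := ⟨V, hVW, hWV⟩
  have hinvW : ⅟(fromBlocks X₁₁ X₁₂ X₂₁ X₂₂) = V := rfl
  refine ⟨isUnit_of_invertible _, ?_⟩
  rw [Ring.inverse_invertible, Ring.inverse_invertible, Ring.inverse_invertible, hinvW, hVdef,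
    fromCols_mul_fromBlocks, fromCols_mul_fromRows]
  simp only [Matrix.mul_add, Matrix.add_mul, Matrix.mul_sub, Matrix.sub_mul, Matrix.mul_neg,
    Matrix.neg_mul, Matrix.mul_assoc]
  abel
end

section
/- Let R be a unital (not necessarily commutative) ring, and let n₁, n₂, n₃ be index types. Let X be a 3×3 block matrix with blocks X_{ij} : Matrix n_i n_j R for i,j ∈ {1,2,3}. Assume the block X₁₁ is invertible and that T := X₂₂ − X₂₁ X₁₁⁻¹ X₁₂ is invertible. Then the 2×2 block corner W := fromBlocks X₁₁ X₁₂ X₂₁ X₂₂ (indexed by n₁ ⊕ n₂) is invertible, and X₃₃ − [X₃₁ X₃₂] · W⁻¹ · [X₁₃; X₂₃] = (X₃₃ − X₃₁ X₁₁⁻¹ X₁₃) − (X₃₂ − X₃₁ X₁₁⁻¹ X₁₂) · T⁻¹ · (X₂₃ − X₂₁ X₁₁⁻¹ X₁₃). -/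
open Matrix

set_option maxHeartbeats 1000000 in
/-- Successive Schur complementation, second order of elimination: eliminating the
2×2 corner `W = fromBlocks X₁₁ X₁₂ X₂₁ X₂₂` of a 3×3 block matrix in one sweep agrees
with first eliminating `X₁₁` and then eliminating the resulting `(2,2)` block
`T = X₂₂ − X₂₁ X₁₁⁻¹ X₁₂`; moreover `W` is invertible. -/
theorem schur_complement_iterated_eliminate_11_then_22
    {R : Type*} [Ring R]
    {n₁ n₂ n₃ : Type*} [Fintype n₁] [Fintype n₂] [DecidableEq n₁] [DecidableEq n₂]
    (X₁₁ : Matrix n₁ n₁ R) (X₁₂ : Matrix n₁ n₂ R) (X₁₃ : Matrix n₁ n₃ R)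
    (X₂₁ : Matrix n₂ n₁ R) (X₂₂ : Matrix n₂ n₂ R) (X₂₃ : Matrix n₂ n₃ R)
    (X₃₁ : Matrix n₃ n₁ R) (X₃₂ : Matrix n₃ n₂ R) (X₃₃ : Matrix n₃ n₃ R)
    (h11 : IsUnit X₁₁)
    (hT : IsUnit (X₂₂ - X₂₁ * Ring.inverse X₁₁ * X₁₂)) :
    IsUnit (fromBlocks X₁₁ X₁₂ X₂₁ X₂₂) ∧
    X₃₃ - fromCols X₃₁ X₃₂ * Ring.inverse (fromBlocks X₁₁ X₁₂ X₂₁ X₂₂) *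
        fromRows X₁₃ X₂₃ =
      (X₃₃ - X₃₁ * Ring.inverse X₁₁ * X₁₃) -
        (X₃₂ - X₃₁ * Ring.inverse X₁₁ * X₁₂) *
          Ring.inverse (X₂₂ - X₂₁ * Ring.inverse X₁₁ * X₁₂) *
          (X₂₃ - X₂₁ * Ring.inverse X₁₁ * X₁₃) := by
  obtain ⟨i11⟩ := h11.nonempty_invertible
  rw [Ring.inverse_invertible X₁₁] at hT ⊢
  set T : Matrix n₂ n₂ R := X₂₂ - X₂₁ * ⅟X₁₁ * X₁₂ with hTdef
  obtain ⟨iT⟩ := hT.nonempty_invertible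
  have hD : X₂₂ = X₂₁ * ⅟X₁₁ * X₁₂ + T := by rw [hTdef, add_sub_cancel]
  set V : Matrix (n₁ ⊕ n₂) (n₁ ⊕ n₂) R :=
    fromBlocks (⅟X₁₁ + ⅟X₁₁ * X₁₂ * ⅟T * X₂₁ * ⅟X₁₁) (-(⅟X₁₁ * X₁₂ * ⅟T))
      (-(⅟T * X₂₁ * ⅟X₁₁)) (⅟T) with hVdef
  have hWV : fromBlocks X₁₁ X₁₂ X₂₁ X₂₂ * V = 1 := by
    rw [hVdef, hD, fromBlocks_multiply, ← fromBlocks_one, fromBlocks_inj]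
    refine ⟨?_, ?_, ?_, ?_⟩ <;>
      simp only [Matrix.mul_add, Matrix.add_mul, Matrix.mul_neg, Matrix.neg_mul,
        Matrix.mul_assoc, Matrix.mul_one, Matrix.one_mul,
        Matrix.mul_invOf_cancel_left, Matrix.invOf_mul_cancel_left,
        Matrix.mul_invOf_cancel_right, Matrix.invOf_mul_cancel_right,
        mul_invOf_self, invOf_mul_self] <;>
      abel
  have hVW : V * fromBlocks X₁₁ X₁₂ X₂₁ X₂₂ = 1 := by
    rw [hVdef, hD, fromBlocks_multiply, ← fromBlocks_one, fromBlocks_inj]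
    refine ⟨?_, ?_, ?_, ?_⟩ <;>
      simp only [Matrix.mul_add, Matrix.add_mul, Matrix.mul_neg, Matrix.neg_mul,
        Matrix.mul_assoc, Matrix.mul_one, Matrix.one_mul,
        Matrix.mul_invOf_cancel_left, Matrix.invOf_mul_cancel_left,
        Matrix.mul_invOf_cancel_right, Matrix.invOf_mul_cancel_right,
        mul_invOf_self, invOf_mul_self] <;>
      abel
  letI iW : Invertible (fromBlocks X₁₁ X₁₂ X₂₁ X₂₂) := ⟨V, hVW, hWV⟩
  refine ⟨isUnit_of_invertible _, ?_⟩
  rw [Ring.inverse_invertible, Ring.inverse_invertible]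
  have hinv : ⅟(fromBlocks X₁₁ X₁₂ X₂₁ X₂₂) = V := invOf_eq_right_inv hWV
  rw [hinv, hVdef, fromCols_mul_fromBlocks, fromCols_mul_fromRows]
  simp only [Matrix.mul_add, Matrix.add_mul, Matrix.mul_sub, Matrix.sub_mul,
    Matrix.mul_neg, Matrix.neg_mul, Matrix.mul_assoc]
  abel
end

section
/- Let R be a unital (not necessarily commutative) ring, and let n₁, n₂, n₃ be index types. Let X be a 3×3 block matrix with blocks X_{ij} : Matrix n_i n_j R for i,j ∈ {1,2,3}. Assume that X₁₁ and X₂₂ are invertible, that S := X₁₁ − X₁₂ X₂₂⁻¹ X₂₁ is invertible, and that T := X₂₂ − X₂₁ X₁₁⁻¹ X₁₂ is invertible. Then the two orders of successive Schur complementation agree: (X₃₃ − X₃₂ X₂₂⁻¹ X₂₃) − (X₃₁ − X₃₂ X₂₂⁻¹ X₂₁) · S⁻¹ · (X₁₃ − X₁₂ X₂₂⁻¹ X₂₃) = (X₃₃ − X₃₁ X₁₁⁻¹ X₁₃) − (X₃₂ − X₃₁ X₁₁⁻¹ X₁₂) · T⁻¹ · (X₂₃ − X₂₁ X₁₁⁻¹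 X₁₃). -/
open Matrix

/-- The successive Schur complementation rule (Lemma 4 of the paper): for a 3×3 block
matrix, first eliminating `X₂₂` and then the resulting `(1,1)` block
`S = X₁₁ − X₁₂ X₂₂⁻¹ X₂₁` yields the same result as first eliminating `X₁₁` and then
the resulting `(2,2)` block `T = X₂₂ − X₂₁ X₁₁⁻¹ X₁₂`. -/
theorem schur_complement_successive_commute
    {R : Type*} [Ring R]
    {n₁ n₂ n₃ : Type*} [Fintype n₁] [Fintype n₂] [DecidableEq n₁] [DecidableEq n₂]
    (X₁₁ : Matrix n₁ n₁ R) (X₁₂ : Matrix n₁ n₂ R) (X₁₃ : Matrix n₁ n₃ R)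
    (X₂₁ : Matrix n₂ n₁ R) (X₂₂ : Matrix n₂ n₂ R) (X₂₃ : Matrix n₂ n₃ R)
    (X₃₁ : Matrix n₃ n₁ R) (X₃₂ : Matrix n₃ n₂ R) (X₃₃ : Matrix n₃ n₃ R)
    (h11 : IsUnit X₁₁) (h22 : IsUnit X₂₂)
    (hS : IsUnit (X₁₁ - X₁₂ * Ring.inverse X₂₂ * X₂₁))
    (hT : IsUnit (X₂₂ - X₂₁ * Ring.inverse X₁₁ * X₁₂)) :
    (X₃₃ - X₃₂ * Ring.inverse X₂₂ * X₂₃) -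
      (X₃₁ - X₃₂ * Ring.inverse X₂₂ * X₂₁) *
        Ring.inverse (X₁₁ - X₁₂ * Ring.inverse X₂₂ * X₂₁) *
        (X₁₃ - X₁₂ * Ring.inverse X₂₂ * X₂₃) =
    (X₃₃ - X₃₁ * Ring.inverse X₁₁ * X₁₃) -
      (X₃₂ - X₃₁ * Ring.inverse X₁₁ * X₁₂) *
        Ring.inverse (X₂₂ - X₂₁ * Ring.inverse X₁₁ * X₁₂) *
        (X₂₃ - X₂₁ * Ring.inverse X₁₁ * X₁₃) := by
  set a := Ring.inverse X₁₁ with ha_def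
  set d := Ring.inverse X₂₂ with hd_def
  set S := X₁₁ - X₁₂ * d * X₂₁ with hS_def
  set T := X₂₂ - X₂₁ * a * X₁₂ with hT_def
  set s := Ring.inverse S with hs_def
  set t := Ring.inverse T with ht_def
  have ha1 : X₁₁ * a = 1 := Ring.mul_inverse_cancel _ h11
  have ha2 : a * X₁₁ = 1 := Ring.inverse_mul_cancel _ h11
  have hd1 : X₂₂ * d = 1 := Ring.mul_inverse_cancel _ h22
  have hd2 : d * X₂₂ = 1 := Ring.inverse_mul_cancel _ h22
  have hs1 : S * s = 1 := Ring.mul_inverse_cancel _ hS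
  have hs2 : s * S = 1 := Ring.inverse_mul_cancel _ hS
  have ht1 : T * t = 1 := Ring.mul_inverse_cancel _ hT
  have ht2 : t * T = 1 := Ring.inverse_mul_cancel _ hT
  -- cancellation helpers
  have cA1 : ∀ (Z : Matrix n₁ n₂ R), X₁₁ * (a * Z) = Z := fun Z => by
    rw [← Matrix.mul_assoc, ha1, Matrix.one_mul]
  have cA1' : ∀ (Z : Matrix n₁ n₃ R), X₁₁ * (a * Z) = Z := fun Z => by
    rw [← Matrix.mul_assoc, ha1, Matrix.one_mul]
  have cD1 : ∀ (Z : Matrix n₂ n₁ R), X₂₂ * (d * Z) = Z := fun Z => by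
    rw [← Matrix.mul_assoc, hd1, Matrix.one_mul]
  have cD1' : ∀ (Z : Matrix n₂ n₃ R), X₂₂ * (d * Z) = Z := fun Z => by
    rw [← Matrix.mul_assoc, hd1, Matrix.one_mul]
  have cD2 : ∀ (Z : Matrix n₂ n₃ R), d * (X₂₂ * Z) = Z := fun Z => by
    rw [← Matrix.mul_assoc, hd2, Matrix.one_mul]
  have cS1 : ∀ (Z : Matrix n₁ n₂ R), s * (S * Z) = Z := fun Z => by
    rw [← Matrix.mul_assoc, hs2, Matrix.one_mul]
  have cS1' : ∀ (Z : Matrix n₁ n₃ R), S * (s * Z) = Z := fun Z => by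
    rw [← Matrix.mul_assoc, hs1, Matrix.one_mul]
  have cT1 : ∀ (Z : Matrix n₂ n₁ R), t * (T * Z) = Z := fun Z => by
    rw [← Matrix.mul_assoc, ht2, Matrix.one_mul]
  have cT1' : ∀ (Z : Matrix n₂ n₃ R), t * (T * Z) = Z := fun Z => by
    rw [← Matrix.mul_assoc, ht2, Matrix.one_mul]
  have cT2 : ∀ (Z : Matrix n₂ n₁ R), T * (t * Z) = Z := fun Z => by
    rw [← Matrix.mul_assoc, ht1, Matrix.one_mul]
  have cT2' : ∀ (Z : Matrix n₂ n₃ R), T * (t * Z) = Z := fun Z => by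
    rw [← Matrix.mul_assoc, ht1, Matrix.one_mul]
  -- exchange identities
  have key1 : S * (a * X₁₂) = X₁₂ * (d * T) := by
    rw [hS_def, hT_def]
    simp only [Matrix.sub_mul, Matrix.mul_sub, Matrix.mul_assoc, cA1]
    rw [hd2, Matrix.mul_one]
  have key2 : T * (d * X₂₁) = X₂₁ * (a * S) := by
    rw [hS_def, hT_def]
    simp only [Matrix.sub_mul, Matrix.mul_sub, Matrix.mul_assoc, cD1]
    rw [ha2, Matrix.mul_one]
  -- the four substitution rules
  have cS2 : ∀ (Z : Matrix n₁ n₁ R), s * (S * Z) = Z := fun Z => by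
    rw [← Matrix.mul_assoc, hs2, Matrix.one_mul]
  have cS3 : ∀ (Z : Matrix n₁ n₃ R), s * (S * Z) = Z := fun Z => by
    rw [← Matrix.mul_assoc, hs2, Matrix.one_mul]
  have key3 : ∀ (Z : Matrix n₂ n₃ R), s * (X₁₂ * (d * Z)) = a * (X₁₂ * (t * Z)) := by
    intro Z
    symm
    calc a * (X₁₂ * (t * Z)) = s * (S * (a * (X₁₂ * (t * Z)))) := by rw [cS3]
      _ = s * ((S * (a * X₁₂)) * (t * Z)) := by rw [Matrix.mul_assoc, Matrix.mul_assoc]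
      _ = s * ((X₁₂ * (d * T)) * (t * Z)) := by rw [key1]
      _ = s * (X₁₂ * (d * (T * (t * Z)))) := by rw [Matrix.mul_assoc, Matrix.mul_assoc]
      _ = s * (X₁₂ * (d * Z)) := by rw [cT2']
  have key4 : ∀ (Z : Matrix n₁ n₃ R), d * (X₂₁ * (s * Z)) = t * (X₂₁ * (a * Z)) := by
    intro Z
    calc d * (X₂₁ * (s * Z)) = t * (T * (d * (X₂₁ * (s * Z)))) := by rw [cT1']
      _ = t * ((T * (d * X₂₁)) * (s * Z)) := by rw [Matrix.mul_assoc, Matrix.mul_assoc]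
      _ = t * ((X₂₁ * (a * S)) * (s * Z)) := by rw [key2]
      _ = t * (X₂₁ * (a * (S * (s * Z)))) := by rw [Matrix.mul_assoc, Matrix.mul_assoc]
      _ = t * (X₂₁ * (a * Z)) := by rw [cS1']
  -- Woodbury identity for s
  have key1' : s = a + a * (X₁₂ * (t * (X₂₁ * a))) := by
    have h : S * (a + a * (X₁₂ * (t * (X₂₁ * a)))) = 1 := by
      have e1 : S * (a * (X₁₂ * (t * (X₂₁ * a))))
          = X₁₂ * (d * (X₂₁ * a)) := by
        calc S * (a * (X₁₂ * (t * (X₂₁ * a))))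
            = (S * (a * X₁₂)) * (t * (X₂₁ * a)) := by rw [Matrix.mul_assoc, Matrix.mul_assoc]
          _ = (X₁₂ * (d * T)) * (t * (X₂₁ * a)) := by rw [key1]
          _ = X₁₂ * (d * (T * (t * (X₂₁ * a)))) := by rw [Matrix.mul_assoc, Matrix.mul_assoc]
          _ = X₁₂ * (d * (X₂₁ * a)) := by rw [cT2]
      have e2 : S * a = 1 - X₁₂ * (d * (X₂₁ * a)) := by
        rw [hS_def, Matrix.sub_mul, ha1, Matrix.mul_assoc, Matrix.mul_assoc]
      rw [Matrix.mul_add, e1, e2, sub_add_cancel]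
    calc s = s * (S * (a + a * (X₁₂ * (t * (X₂₁ * a))))) := by rw [h, Matrix.mul_one]
      _ = a + a * (X₁₂ * (t * (X₂₁ * a))) := cS2 _
  -- expansion of X₂₁ * a * X₁₂
  have key5 : ∀ (Z : Matrix n₂ n₃ R), X₂₁ * (a * (X₁₂ * Z)) = X₂₂ * Z - T * Z := by
    intro Z
    rw [hT_def, Matrix.sub_mul, sub_sub_cancel, Matrix.mul_assoc, Matrix.mul_assoc]
  simp only [Matrix.sub_mul, Matrix.mul_sub, Matrix.mul_assoc]
  simp only [key3, key4]
  simp only [key1', Matrix.add_mul, Matrix.mul_add, Matrix.sub_mul, Matrix.mul_sub, Matrix.mul_assoc, key5, cD2, cT1', cT2', cA1']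
  clear_value a d S T s t
  abel
end

section
/- Let R be a unital (not necessarily commutative) ring, let p ∈ R be an idempotent (p·p = p), and let m, n be index types. Let A' : Matrix m m R, B' : Matrix m n R, C' : Matrix n m R, D' : Matrix n n R. Assume D' is invertible, every entry of D' commutes with p, and either every entry x of B' satisfies p·x·(1−p) = 0, or every entry x of C' satisfies (1−p)·x·p = 0. Write P•M for the matrix obtained from M by multiplying every entry by p on the left and P'•M for right multiplication of every entry by p (so the compression of M is the matrix with entries p·M_{ij}·p). Then the compression of the Schur complement A' − B'·D'⁻¹·C' equals the Schur complement of the compressions: (compression of A' − B'D'⁻¹C') = (compression of A') − (compression of B')·D'⁻¹·(compression of C'). -/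
open Matrix

set_option maxHeartbeats 1000000

/-- Entrywise compression of a matrix `M` over `R` by an idempotent `p ∈ R`:
each entry `x` is replaced by `p * x * p`. -/
def compress {R : Type*} [Ring R] (p : R) {m n : Type*} (M : Matrix m n R) :
    Matrix m n R :=
  M.map fun x => p * x * p

private lemma compress_eq {R : Type*} [Ring R] (p : R)
    {m n : Type*} [Fintype m] [Fintype n] [DecidableEq m] [DecidableEq n]
    (M : Matrix m n R) :
    compress p M =
      Matrix.diagonal (fun _ : m => p) * M * Matrix.diagonal (fun _ : n => p) := by
  ext i j
  simp [compress, Matrix.mul_diagonal, Matrix.diagonal_mul, mul_assoc]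

/-- Block-matrix form of the compression–Schur-complement exchange: the entrywise
compression by an idempotent `p` of the Schur complement `A' − B' D'⁻¹ C'` equals the
Schur complement of the compressions, provided every entry of `D'` commutes with `p`
and one of the one-sided vanishing conditions on `B'` or `C'` holds. -/
theorem compress_schur_complement
    {R : Type*} [Ring R] (p : R) (hp : p * p = p)
    {m n : Type*} [Fintype m] [Fintype n] [DecidableEq n]
    (A' : Matrix m m R) (B' : Matrix m n R) (C' : Matrix n m R) (D' : Matrix n n R)
    (hD : IsUnit D')
    (hDp : ∀ i j, Commute (D' i j) p)
    (h : (∀ i j, p * B' i j * (1 - p) = 0) ∨ (∀ i j, (1 - p) * C' i j * p = 0)) :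
    compress p (A' - B' * Ring.inverse D' * C') =
      compress p A' - compress p B' * Ring.inverse D' * compress p C' := by
  classical
  rw [compress_eq, compress_eq, compress_eq, compress_eq]
  set E := Ring.inverse D' with hE
  set Pm : Matrix m m R := Matrix.diagonal (fun _ => p) with hPm
  set Pn : Matrix n n R := Matrix.diagonal (fun _ => p) with hPn
  -- Pn is idempotent
  have hpn : Pn * Pn = Pn := by
    rw [hPn, Matrix.diagonal_mul_diagonal]
    simp [hp]
  -- Pn commutes with D'
  have hcommD : Commute Pn D' := by
    show Pn * D' = D' * Pn
    ext i j
    simp only [hPn, Matrix.diagonal_mul, Matrix.mul_diagonal]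
    exact (hDp i j).symm
  -- hence Pn commutes with E
  have hcommE : Pn * E = E * Pn := by
    have hu : Commute Pn hD.unit.val := by rwa [hD.unit_spec]
    have hEu : E = (hD.unit⁻¹).val := by
      rw [hE]
      conv_lhs => rw [← hD.unit_spec]
      exact Ring.inverse_unit hD.unit
    rw [hEu]
    exact hu.units_inv_right
  have h2' : ∀ X : Matrix n m R, Pn * (E * X) = E * (Pn * X) := fun X => by
    rw [← Matrix.mul_assoc, hcommE, Matrix.mul_assoc]
  have hpn' : ∀ X : Matrix n m R, Pn * (Pn * X) = Pn * X := fun X => by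
    rw [← Matrix.mul_assoc, hpn]
  -- reduce to the B*E*C term
  have key : Pm * (B' * E * C') * Pm = (Pm * B' * Pn) * E * (Pn * C' * Pm) := by
    rcases h with hB | hC
    · -- p * B' i j = p * B' i j * p
      have h1 : Pm * B' = Pm * B' * Pn := by
        ext i j
        simp only [hPm, hPn, Matrix.diagonal_mul, Matrix.mul_diagonal]
        have hb := hB i j
        rw [mul_sub, mul_one, sub_eq_zero] at hb
        exact hb
      have h1' : ∀ X : Matrix n m R, Pm * (B' * X) = Pm * (B' * (Pn * X)) :=
        fun X => by
          calc Pm * (B' * X) = (Pm * B') * X := (Matrix.mul_assoc _ _ _).symm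
            _ = (Pm * B' * Pn) * X := by conv_lhs => rw [h1]
            _ = Pm * (B' * (Pn * X)) := by simp only [Matrix.mul_assoc]
      calc Pm * (B' * E * C') * Pm
          = Pm * (B' * (E * (C' * Pm))) := by
            simp only [Matrix.mul_assoc]
        _ = Pm * (B' * (Pn * (E * (C' * Pm)))) := h1' _
        _ = Pm * (B' * (E * (Pn * (C' * Pm)))) := by rw [h2']
        _ = (Pm * B' * Pn) * E * (Pn * C' * Pm) := by
            simp only [Matrix.mul_assoc]
            rw [h2', hpn']
    · -- C' i j * p = p * (C' i j * p)
      have hc : C' * Pm = Pn * (C' * Pm) := by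
        ext i j
        simp only [hPm, Matrix.mul_diagonal]
        conv_rhs => rw [hPn]
        rw [Matrix.diagonal_mul, Matrix.mul_diagonal]
        have hcc := hC i j
        rw [sub_mul, sub_mul, one_mul, sub_eq_zero] at hcc
        exact hcc.trans (mul_assoc _ _ _)
      calc Pm * (B' * E * C') * Pm
          = Pm * (B' * (E * (C' * Pm))) := by
            simp only [Matrix.mul_assoc]
        _ = Pm * (B' * (E * (Pn * (C' * Pm)))) := by
            conv_lhs => rw [hc]
        _ = (Pm * B' * Pn) * E * (Pn * C' * Pm) := by
            simp only [Matrix.mul_assoc]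
            rw [h2', hpn']
  rw [Matrix.mul_sub, Matrix.sub_mul, key]
end

section
/- Let R be a unital star ring, let y ∈ R be invertible, and let f ∈ R satisfy y + star y = −(f · star f). Then u := 1 + (star f) · y⁻¹ · f is unitary: u · star u = 1 and (star u) · u = 1. Consequently, for any n ∈ R with n · star n = 1 and (star n) · n = 1, the element n · u also satisfies (n·u) · star(n·u) = 1 and star(n·u) · (n·u) = 1. -/
/-- If `y` is invertible and satisfies the dissipation relation `y + y* = −f f*`, then
`u = 1 + f* y⁻¹ f` is unitary, and hence `n·u` is unitary for every unitary `n`.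
This is the claim that the scattering coefficient `N̂ = N(I + F* Y⁻¹ F)` of the
adiabatically eliminated dynamics is again unitary. -/
theorem unitary_of_dissipation
    {R : Type*} [Ring R] [StarRing R] (y f : R)
    (hy : IsUnit y) (h : y + star y = -(f * star f)) :
    ((1 + star f * Ring.inverse y * f) * star (1 + star f * Ring.inverse y * f) = 1 ∧
      star (1 + star f * Ring.inverse y * f) * (1 + star f * Ring.inverse y * f) = 1) ∧
    ∀ n : R, n * star n = 1 → star n * n = 1 →
      (n * (1 + star f * Ring.inverse y * f)) *
          star (n * (1 + star f * Ring.inverse y * f)) = 1 ∧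
      star (n * (1 + star f * Ring.inverse y * f)) *
          (n * (1 + star f * Ring.inverse y * f)) = 1 := by
  set z := Ring.inverse y with hzdef
  have hz1 : y * z = 1 := Ring.mul_inverse_cancel y hy
  have hz2 : z * y = 1 := Ring.inverse_mul_cancel y hy
  have hw1 : star y * star z = 1 := by rw [← star_mul, hz2, star_one]
  have hw2 : star z * star y = 1 := by rw [← star_mul, hz1, star_one]
  have hff : f * star f = -(y + star y) := by rw [h, neg_neg]
  set w := star z with hwdef
  have hstar : star (1 + star f * z * f) = 1 + star f * w * f := by
    simp [star_mul, mul_assoc, hwdef]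
  have key1 : (star f * z * f) * (star f * w * f) = -(star f * z * f + star f * w * f) := by
    calc (star f * z * f) * (star f * w * f)
        = star f * z * (f * star f) * (w * f) := by noncomm_ring
      _ = star f * z * (-(y + star y)) * (w * f) := by rw [hff]
      _ = -(star f * (z * y) * (w * f) + star f * z * ((star y * w) * f)) := by noncomm_ring
      _ = -(star f * z * f + star f * w * f) := by
          rw [hz2, hw1]; noncomm_ring
  have key2 : (star f * w * f) * (star f * z * f) = -(star f * w * f + star f * z * f) := by
    calc (star f * w * f) * (star f * z * f)
        = star f * w * (f * star f) * (z * f) := by noncomm_ring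
      _ = star f * w * (-(y + star y)) * (z * f) := by rw [hff]
      _ = -(star f * w * ((y * z) * f) + star f * (w * star y) * (z * f)) := by noncomm_ring
      _ = -(star f * w * f + star f * z * f) := by
          rw [hz1, hw2]; noncomm_ring
  have hu1 : (1 + star f * z * f) * star (1 + star f * z * f) = 1 := by
    rw [hstar]
    have : (1 + star f * z * f) * (1 + star f * w * f)
        = 1 + (star f * z * f + star f * w * f) + (star f * z * f) * (star f * w * f) := by
      noncomm_ring
    rw [this, key1]; abel
  have hu2 : star (1 + star f * z * f) * (1 + star f * z * f) = 1 := by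
    rw [hstar]
    have : (1 + star f * w * f) * (1 + star f * z * f)
        = 1 + (star f * w * f + star f * z * f) + (star f * w * f) * (star f * z * f) := by
      noncomm_ring
    rw [this, key2]; abel
  refine ⟨⟨hu1, hu2⟩, fun n hn1 hn2 => ⟨?_, ?_⟩⟩
  · calc n * (1 + star f * z * f) * star (n * (1 + star f * z * f))
        = n * ((1 + star f * z * f) * star (1 + star f * z * f)) * star n := by
          rw [star_mul]; noncomm_ring
      _ = 1 := by rw [hu1, mul_one, hn1]
  · calc star (n * (1 + star f * z * f)) * (n * (1 + star f * z * f))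
        = star (1 + star f * z * f) * (star n * n) * (1 + star f * z * f) := by
          rw [star_mul]; noncomm_ring
      _ = 1 := by rw [hn2, mul_one, hu2]
end

section
/- Let R be a unital star ring. Let p ∈ R satisfy p·p = p and star p = p, and set q := 1 − p. Let F, G, A, Y, Y', N ∈ R and assume: (i) p·F = 0; (ii) p·Y = 0 and Y·p = 0; (iii) p·Y' = 0 and Y'·p = 0; (iv) Y·Y' = q and Y'·Y = q; (v) A + star A = −(F·(star G) + G·(star F)); (vi) Y + star Y = −F·(star F). Then (−N·(star G) + N·(star F)·Y'·A)·p = −(N + N·(star F)·Y'·F) · star(G − p·A·Y'·F) · p. -/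
/-- The Hudson–Parthasarathy condition `M̂ = −N̂ L̂*` for the adiabatically eliminated
coefficients: under the Bouten–van Handel–Silberfarb structural assumptions on the
self-adjoint idempotent `p` (projection onto the slow subspace), the generalized
inverse `Y'` of `Y`, and the dissipation relations, one has
`(−N G* + N F* Y' A) p = −(N + N F* Y' F)(G − p A Y' F)* p`. -/
theorem eliminated_M_eq_neg_N_Lstar
    {R : Type*} [Ring R] [StarRing R] (p F G A Y Y' N : R)
    (hp : p * p = p) (hps : star p = p)
    (hpF : p * F = 0)
    (hpY : p * Y = 0) (hYp : Y * p = 0)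
    (hpY' : p * Y' = 0) (hY'p : Y' * p = 0)
    (hYY' : Y * Y' = 1 - p) (hY'Y : Y' * Y = 1 - p)
    (hA : A + star A = -(F * star G + G * star F))
    (hY : Y + star Y = -(F * star F)) :
    (-(N * star G) + N * star F * Y' * A) * p =
      -((N + N * star F * Y' * F) * star (G - p * A * Y' * F)) * p := by
  -- star F * p = 0
  have hFp : star F * p = 0 := by
    have := congrArg star hpF
    simpa [star_mul, hps] using this
  -- p * star Y' = 0
  have hpY's : p * star Y' = 0 := by
    have := congrArg star hY'p
    simpa [star_mul, hps] using this
  -- star Y * star Y' = 1 - p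
  have hYsY's : star Y * star Y' = 1 - p := by
    have := congrArg star hY'Y
    simpa [star_mul, hps] using this
  -- A * p = -(star A * p) - F * star G * p
  have hApA : A * p = -(star A * p) - F * star G * p := by
    have h := congrArg (· * p) hA
    simp only [add_mul, neg_mul, mul_assoc] at h
    rw [hFp, mul_zero] at h
    linear_combination (norm := noncomm_ring) h
  -- key: Y' * (F * star F) * star Y' = -(star Y' + Y')
  have hkey : Y' * (F * star F) * star Y' = -(star Y' + Y') := by
    have h1 : Y' * (F * star F) * star Y' = -(Y' * Y * star Y') - Y' * (star Y * star Y') := by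
      linear_combination (norm := noncomm_ring) Y' * hY * star Y'
    rw [h1, hY'Y, hYsY's]
    rw [mul_sub, mul_one, hY'p, sub_mul, one_mul, hpY's]
    noncomm_ring
  simp only [star_sub, star_mul, hps]
  linear_combination (norm := noncomm_ring) (N * star F * Y') * hApA -
    (N * star F) * hkey * (star A * p) - (N * star F * star Y' * star A) * hp -
    (N * star F * Y' * F * star F * star Y' * star A) * hp
end

section
/- Let R be a unital star ring. Let p ∈ R satisfy p·p = p and star p = p, and set q := 1 − p. Let F, G, A, B, Y, Y' ∈ R and assume: (i) p·F = 0; (ii) p·Y = 0 and Y·p = 0; (iii) p·Y' = 0 and Y'·p = 0; (iv) Y·Y' = q and Y'·Y = q; (v) A + star A = −(F·(star G) + G·(star F)); (vi) Y + star Y = −F·(star F); (vii) B + star B = −G·(star G). Then, with K̂ := p·(B − A·Y'·A)·p and L̂ := G − A·Y'·F, one has K̂ + star K̂ = −p·L̂·(star L̂)·p. -/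
/-- The dissipation relation for the adiabatically eliminated drift and coupling:
under the Bouten–van Handel–Silberfarb structural assumptions on the self-adjoint
idempotent `p`, the generalized inverse `Y'` of `Y`, and the Hudson–Parthasarathy
dissipation relations for `A`, `B`, `Y`, the compressed drift `K̂ = p(B − A Y' A)p`
and coupling `L̂ = G − A Y' F` satisfy `K̂ + K̂* = −p L̂ L̂* p`. -/
theorem eliminated_dissipation_relation
    {R : Type*} [Ring R] [StarRing R] (p F G A B Y Y' : R)
    (hp : p * p = p) (hps : star p = p)
    (hpF : p * F = 0)
    (hpY : p * Y = 0) (hYp : Y * p = 0)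
    (hpY' : p * Y' = 0) (hY'p : Y' * p = 0)
    (hYY' : Y * Y' = 1 - p) (hY'Y : Y' * Y = 1 - p)
    (hA : A + star A = -(F * star G + G * star F))
    (hY : Y + star Y = -(F * star F))
    (hB : B + star B = -(G * star G)) :
    p * (B - A * Y' * A) * p + star (p * (B - A * Y' * A) * p) =
      -(p * ((G - A * Y' * F) * star (G - A * Y' * F)) * p) := by
  have hFsp : star F * p = 0 := by
    have := congrArg star hpF
    simpa [star_mul, hps] using this
  have hpsY' : p * star Y' = 0 := by
    have := congrArg star hY'p
    simpa [star_mul, hps] using this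
  have hYsYs' : star Y * star Y' = 1 - p := by
    have := congrArg star hY'Y
    simpa [star_mul, hps] using this
  have hFF : F * star F = -(Y + star Y) := by rw [hY, neg_neg]
  have hAp : A * p = -(star A * p) - F * star G * p := by
    have h : (A + star A) * p = -(F * star G + G * star F) * p := by rw [hA]
    have h2 : G * (star F * p) = 0 := by rw [hFsp, mul_zero]
    calc A * p = (A + star A) * p - star A * p := by noncomm_ring
    _ = -(F * star G + G * star F) * p - star A * p := by rw [h]
    _ = -(star A * p) - F * star G * p - G * (star F * p) := by noncomm_ring
    _ = -(star A * p) - F * star G * p := by rw [h2, sub_zero]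
  have hpAs : p * star A = -(p * A) - p * G * star F := by
    have h := congrArg star hAp
    calc p * star A = star (A * p) := by rw [star_mul, hps]
    _ = star (-(star A * p) - F * star G * p) := h
    _ = -(p * A) - p * G * star F := by
        simp only [star_sub, star_neg, star_mul, star_star, hps]
        noncomm_ring
  -- key 1 : substitute A*p in p A Y' A p
  have key1 : p * A * Y' * A * p
      = -(p * A * Y' * star A * p) - p * A * Y' * F * star G * p := by
    calc p * A * Y' * A * p = p * A * Y' * (A * p) := by noncomm_ring
    _ = p * A * Y' * (-(star A * p) - F * star G * p) := by rw [hAp]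
    _ = _ := by noncomm_ring
  -- key 2 : substitute p * star A
  have key2 : p * star A * star Y' * star A * p
      = -(p * A * star Y' * star A * p) - p * G * star F * star Y' * star A * p := by
    calc p * star A * star Y' * star A * p
        = (p * star A) * (star Y' * star A * p) := by noncomm_ring
    _ = (-(p * A) - p * G * star F) * (star Y' * star A * p) := by rw [hpAs]
    _ = _ := by noncomm_ring
  -- key 3 : substitute F * star F
  have key3 : p * A * Y' * F * star F * star Y' * star A * p
      = -(p * A * star Y' * star A * p) - p * A * Y' * star A * p := by
    have e1 : p * A * (Y' * Y) * (star Y' * (star A * p))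
        = p * A * star Y' * star A * p := by
      rw [hY'Y]
      have : p * (p * star Y') = 0 := by rw [hpsY', mul_zero]
      calc p * A * (1 - p) * (star Y' * (star A * p))
          = p * A * star Y' * star A * p
            - p * A * (p * star Y') * (star A * p) := by noncomm_ring
      _ = _ := by rw [hpsY']; noncomm_ring
    have e2 : p * A * Y' * (star Y * star Y') * (star A * p)
        = p * A * Y' * star A * p := by
      rw [hYsYs']
      calc p * A * Y' * (1 - p) * (star A * p)
          = p * A * Y' * star A * p - p * A * (Y' * p) * (star A * p) := by noncomm_ring
      _ = _ := by rw [hY'p]; noncomm_ring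
    calc p * A * Y' * F * star F * star Y' * star A * p
        = p * A * Y' * (F * star F) * (star Y' * (star A * p)) := by noncomm_ring
    _ = p * A * Y' * (-(Y + star Y)) * (star Y' * (star A * p)) := by rw [hFF]
    _ = -(p * A * (Y' * Y) * (star Y' * (star A * p)))
        - p * A * Y' * (star Y * star Y') * (star A * p) := by noncomm_ring
    _ = _ := by rw [e1, e2]
  -- expand the star on the left
  have hstar : star (p * (B - A * Y' * A) * p)
      = p * star B * p - p * star A * star Y' * star A * p := by
    simp only [star_mul, star_sub, hps]
    noncomm_ring
  have hBp : p * (B + star B) * p = -(p * G * star G * p) := by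
    rw [hB]; noncomm_ring
  -- combine
  calc p * (B - A * Y' * A) * p + star (p * (B - A * Y' * A) * p)
      = p * (B + star B) * p - p * A * Y' * A * p
        - p * star A * star Y' * star A * p := by rw [hstar]; noncomm_ring
  _ = -(p * G * star G * p)
      - (-(p * A * Y' * star A * p) - p * A * Y' * F * star G * p)
      - (-(p * A * star Y' * star A * p) - p * G * star F * star Y' * star A * p) := by
        rw [hBp, key1, key2]
  _ = -(p * G * star G * p - p * G * star F * star Y' * star A * p
        - p * A * Y' * F * star G * p
        + (-(p * A * star Y' * star A * p) - p * A * Y' * star A * p)) := by noncomm_ring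
  _ = -(p * G * star G * p - p * G * star F * star Y' * star A * p
        - p * A * Y' * F * star G * p
        + p * A * Y' * F * star F * star Y' * star A * p) := by rw [key3]
  _ = -(p * ((G - A * Y' * F) * star (G - A * Y' * F)) * p) := by
        simp only [star_sub, star_mul]
        noncomm_ring
end

section
/- Let R be a unital star ring, and let ι and ε be index types (internal and external channels). Let B, A_sf, A_f, Y ∈ R; let G_i, F_i : Matrix Unit ι R and G_e, F_e : Matrix Unit ε R; and let N_ii : Matrix ι ι R, N_ie : Matrix ι ε R, N_ei : Matrix ε ι R, N_ee : Matrix ε ε R. Form the 4×4 block matrix G_E with block rows and columns indexed by (system σ, fast f, internal ι, external ε): row σ = [B, A_sf, G_i, G_e]; row f = [A_f, Y, F_i, F_e]; row ι = [−(N_ii·G_iᴴ + N_ie·G_eᴴ), −(N_ii·F_iᴴ + N_ie·F_eᴴ), N_ii − 1, N_ie]; row ε = [−(N_ei·G_iᴴ + N_ee·G_eᴴ), −(N_ei·F_iᴴ + N_ee·F_eᴴ), N_ei, N_ee − 1], where ᴴ denotes the conjugate (star) transpose. Assume: Y is invertible in R; N_ii − 1 is invertible; D₁ := (N_ii − 1)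 + (N_ii·F_iᴴ + N_ie·F_eᴴ)·Y⁻¹·F_i is invertible; and D₂ := Y + F_i·(N_ii − 1)⁻¹·(N_ii·F_iᴴ + N_ie·F_eᴴ) is invertible. Then the Schur complement of G_E obtained by first eliminating the fast block Y and then eliminating the internal block D₁ of the result equals the Schur complement obtained by first eliminating the internal block N_ii − 1 and then eliminating the fast block D₂ of the result (an equality of 2×2 block matrices indexed by σ and ε). -/
open Matrix

/-- Embed a ring element as a 1×1 matrix indexed by `Unit`. -/
def toM {R : Type*} (x : R) : Matrix Unit Unit R := Matrix.of fun _ _ => x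

lemma toM_mul {R : Type*} [Ring R] (a b : R) : toM a * toM b = toM (a * b) := by
  ext i j
  simp [toM, Matrix.mul_apply]

lemma toM_one {R : Type*} [Ring R] : (toM (1 : R)) = 1 := by
  ext i j
  simp [toM, Matrix.one_apply, Subsingleton.elim i j]

section Key

variable {R : Type*} [Ring R] {κ μ α β : Type*}
  [Fintype κ] [DecidableEq κ] [Fintype μ] [DecidableEq μ]

/-- The two-step Schur complement is independent of the elimination order. -/
lemma schur_key
    (X x : Matrix κ κ R) (C : Matrix κ μ R) (D : Matrix μ κ R) (W w : Matrix μ μ R)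
    (Mab : Matrix α β R) (Maf : Matrix α κ R) (Mai : Matrix α μ R)
    (Mfb : Matrix κ β R) (Mib : Matrix μ β R)
    (hx1 : X * x = 1) (hx2 : x * X = 1) (hw1 : W * w = 1) (hw2 : w * W = 1)
    (hp : IsUnit (W - D * x * C)) (hr : IsUnit (X - C * w * D)) :
    (Mab - Maf * x * Mfb) -
        (Mai - Maf * x * C) * Ring.inverse (W - D * x * C) * (Mib - D * x * Mfb)
      = (Mab - Mai * w * Mib) -
        (Maf - Mai * w * D) * Ring.inverse (X - C * w * D) * (Mfb - C * w * Mib) := by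
  set p : Matrix μ μ R := Ring.inverse (W - D * x * C) with hpdef
  set r : Matrix κ κ R := Ring.inverse (X - C * w * D) with hrdef
  have hp1 : (W - D * x * C) * p = 1 := Ring.mul_inverse_cancel _ hp
  have hp2 : p * (W - D * x * C) = 1 := Ring.inverse_mul_cancel _ hp
  have hr1 : (X - C * w * D) * r = 1 := Ring.mul_inverse_cancel _ hr
  have hr2 : r * (X - C * w * D) = 1 := Ring.inverse_mul_cancel _ hr
  -- the two candidate inverses of the 2×2 block matrix `T = [[X, C], [D, W]]`
  set A : Matrix (κ ⊕ μ) (κ ⊕ μ) R :=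
    fromBlocks (x + x * C * p * D * x) (-(x * C * p)) (-(p * D * x)) p with hAdef
  set Bm : Matrix (κ ⊕ μ) (κ ⊕ μ) R :=
    fromBlocks r (-(r * C * w)) (-(w * D * r)) (w + w * D * r * C * w) with hBdef
  set T : Matrix (κ ⊕ μ) (κ ⊕ μ) R := fromBlocks X C D W with hTdef
  have hAT : A * T = 1 := by
    rw [hAdef, hTdef, fromBlocks_multiply, ← fromBlocks_one]
    refine fromBlocks_inj.mpr ⟨?_, ?_, ?_, ?_⟩
    · calc (x + x * C * p * D * x) * X + (-(x * C * p)) * D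
          = x * X + x * C * p * D * (x * X) - x * C * p * D := by
              try simp only [Matrix.add_mul, Matrix.sub_mul, Matrix.mul_add, Matrix.mul_sub,
                Matrix.neg_mul, Matrix.mul_neg, Matrix.mul_assoc, Matrix.mul_one, Matrix.one_mul]
              try abel
        _ = 1 + x * C * p * D * 1 - x * C * p * D := by rw [hx2]
        _ = 1 := by
              try simp only [Matrix.add_mul, Matrix.sub_mul, Matrix.mul_add, Matrix.mul_sub,
                Matrix.neg_mul, Matrix.mul_neg, Matrix.mul_assoc, Matrix.mul_one, Matrix.one_mul]
              try abel
    · calc (x + x * C * p * D * x) * C + (-(x * C * p)) * W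
          = x * C - (x * C) * (p * (W - D * x * C)) := by
              try simp only [Matrix.add_mul, Matrix.sub_mul, Matrix.mul_add, Matrix.mul_sub,
                Matrix.neg_mul, Matrix.mul_neg, Matrix.mul_assoc, Matrix.mul_one, Matrix.one_mul]
              try abel
        _ = x * C - (x * C) * (1 : Matrix μ μ R) := by rw [hp2]
        _ = 0 := by
              try simp only [Matrix.add_mul, Matrix.sub_mul, Matrix.mul_add, Matrix.mul_sub,
                Matrix.neg_mul, Matrix.mul_neg, Matrix.mul_assoc, Matrix.mul_one, Matrix.one_mul]
              try abel
    · calc (-(p * D * x)) * X + p * D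
          = -(p * D * (x * X)) + p * D := by
              try simp only [Matrix.add_mul, Matrix.sub_mul, Matrix.mul_add, Matrix.mul_sub,
                Matrix.neg_mul, Matrix.mul_neg, Matrix.mul_assoc, Matrix.mul_one, Matrix.one_mul]
              try abel
        _ = -(p * D * (1 : Matrix κ κ R)) + p * D := by rw [hx2]
        _ = 0 := by
              try simp only [Matrix.add_mul, Matrix.sub_mul, Matrix.mul_add, Matrix.mul_sub,
                Matrix.neg_mul, Matrix.mul_neg, Matrix.mul_assoc, Matrix.mul_one, Matrix.one_mul]
              try abel
    · calc (-(p * D * x)) * C + p * W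
          = p * (W - D * x * C) := by
              try simp only [Matrix.add_mul, Matrix.sub_mul, Matrix.mul_add, Matrix.mul_sub,
                Matrix.neg_mul, Matrix.mul_neg, Matrix.mul_assoc, Matrix.mul_one, Matrix.one_mul]
              try abel
        _ = 1 := hp2
  have hTB : T * Bm = 1 := by
    rw [hBdef, hTdef, fromBlocks_multiply, ← fromBlocks_one]
    refine fromBlocks_inj.mpr ⟨?_, ?_, ?_, ?_⟩
    · calc X * r + C * (-(w * D * r))
          = (X - C * w * D) * r := by
              try simp only [Matrix.add_mul, Matrix.sub_mul, Matrix.mul_add, Matrix.mul_sub,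
                Matrix.neg_mul, Matrix.mul_neg, Matrix.mul_assoc, Matrix.mul_one, Matrix.one_mul]
              try abel
        _ = 1 := hr1
    · calc X * (-(r * C * w)) + C * (w + w * D * r * C * w)
          = C * w - ((X - C * w * D) * r) * (C * w) := by
              try simp only [Matrix.add_mul, Matrix.sub_mul, Matrix.mul_add, Matrix.mul_sub,
                Matrix.neg_mul, Matrix.mul_neg, Matrix.mul_assoc, Matrix.mul_one, Matrix.one_mul]
              try abel
        _ = C * w - (1 : Matrix κ κ R) * (C * w) := by rw [hr1]
        _ = 0 := by
              try simp only [Matrix.add_mul, Matrix.sub_mul, Matrix.mul_add, Matrix.mul_sub,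
                Matrix.neg_mul, Matrix.mul_neg, Matrix.mul_assoc, Matrix.mul_one, Matrix.one_mul]
              try abel
    · calc D * r + W * (-(w * D * r))
          = D * r - (W * w) * (D * r) := by
              try simp only [Matrix.add_mul, Matrix.sub_mul, Matrix.mul_add, Matrix.mul_sub,
                Matrix.neg_mul, Matrix.mul_neg, Matrix.mul_assoc, Matrix.mul_one, Matrix.one_mul]
              try abel
        _ = D * r - (1 : Matrix μ μ R) * (D * r) := by rw [hw1]
        _ = 0 := by
              try simp only [Matrix.add_mul, Matrix.sub_mul, Matrix.mul_add, Matrix.mul_sub,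
                Matrix.neg_mul, Matrix.mul_neg, Matrix.mul_assoc, Matrix.mul_one, Matrix.one_mul]
              try abel
    · calc D * (-(r * C * w)) + W * (w + w * D * r * C * w)
          = W * w + (W * w) * (D * r * C * w) - D * r * C * w := by
              try simp only [Matrix.add_mul, Matrix.sub_mul, Matrix.mul_add, Matrix.mul_sub,
                Matrix.neg_mul, Matrix.mul_neg, Matrix.mul_assoc, Matrix.mul_one, Matrix.one_mul]
              try abel
        _ = 1 + (1 : Matrix μ μ R) * (D * r * C * w) - D * r * C * w := by rw [hw1]
        _ = 1 := by
              try simp only [Matrix.add_mul, Matrix.sub_mul, Matrix.mul_add, Matrix.mul_sub,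
                Matrix.neg_mul, Matrix.mul_neg, Matrix.mul_assoc, Matrix.mul_one, Matrix.one_mul]
              try abel
  have hAB : A = Bm := by
    calc A = A * (T * Bm) := by rw [hTB, mul_one]
      _ = (A * T) * Bm := by rw [mul_assoc]
      _ = Bm := by rw [hAT, one_mul]
  rw [hAdef, hBdef] at hAB
  have h1 : x + x * C * p * D * x = r := congrArg Matrix.toBlocks₁₁ hAB
  have h2 : -(x * C * p) = -(r * C * w) := congrArg Matrix.toBlocks₁₂ hAB
  have h3 : -(p * D * x) = -(w * D * r) := congrArg Matrix.toBlocks₂₁ hAB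
  have h4 : p = w + w * D * r * C * w := congrArg Matrix.toBlocks₂₂ hAB
  have h2' : x * C * p = r * C * w := by rwa [neg_inj] at h2
  have h3' : p * D * x = w * D * r := by rwa [neg_inj] at h3
  -- specialize to rectangular products
  have k1 : r * Mfb = x * Mfb + x * (C * (p * (D * (x * Mfb)))) := by
    have := congrArg (fun M => M * Mfb) h1
    simpa [Matrix.add_mul, Matrix.mul_assoc] using this.symm
  have k2 : r * (C * (w * Mib)) = x * (C * (p * Mib)) := by
    have := congrArg (fun M => M * Mib) h2'
    simpa [Matrix.mul_assoc] using this.symm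
  have k3 : w * (D * (r * Mfb)) = p * (D * (x * Mfb)) := by
    have := congrArg (fun M => M * Mfb) h3'
    simpa [Matrix.mul_assoc] using this.symm
  have k4 : w * (D * (r * (C * (w * Mib)))) = p * Mib - w * Mib := by
    have := congrArg (fun M => M * Mib) h4
    simp only [Matrix.add_mul, Matrix.mul_assoc] at this
    rw [this]; abel
  simp only [Matrix.sub_mul, Matrix.mul_sub, Matrix.mul_assoc]
  rw [k4, k3, k2, k1]
  simp only [Matrix.add_mul, Matrix.mul_add, Matrix.sub_mul, Matrix.mul_sub, Matrix.mul_assoc]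
  abel

end Key

/-- Commutativity of adiabatic elimination and the instantaneous feedback limit at the
level of extended Itô generator matrices (proof of Theorem 2 of the paper):
for the extended Itô generator matrix `G_E` with system (σ), fast (f), internal (ι)
and external (ε) block rows/columns, first eliminating the fast block `Y` and then the
internal block `D₁` of the result yields the same 2×2 block matrix (indexed by σ and ε)
as first eliminating the internal block `N_ii − 1` and then the fast block `D₂` of the
result. -/
theorem extended_Ito_generator_eliminations_commute
    {R : Type*} [Ring R] [StarRing R]
    {ι ε : Type*} [Fintype ι] [DecidableEq ι] [Fintype ε] [DecidableEq ε]
    (B A_sf A_f Y : R)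
    (G_i F_i : Matrix Unit ι R) (G_e F_e : Matrix Unit ε R)
    (N_ii : Matrix ι ι R) (N_ie : Matrix ι ε R)
    (N_ei : Matrix ε ι R) (N_ee : Matrix ε ε R)
    (hY : IsUnit Y)
    (hNii : IsUnit (N_ii - 1))
    (hD₁ : IsUnit ((N_ii - 1) +
      (N_ii * F_iᴴ + N_ie * F_eᴴ) * toM (Ring.inverse Y) * F_i))
    (hD₂ : IsUnit (toM Y +
      F_i * Ring.inverse (N_ii - 1) * (N_ii * F_iᴴ + N_ie * F_eᴴ))) :
    -- blocks of the extended Itô generator matrix G_E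
    let Mσσ := toM B; let Mσf := toM A_sf; let Mσi := G_i; let Mσe := G_e
    let Mfσ := toM A_f; let Mff := toM Y; let Mfi := F_i; let Mfe := F_e
    let Miσ := -(N_ii * G_iᴴ + N_ie * G_eᴴ)
    let Mif := -(N_ii * F_iᴴ + N_ie * F_eᴴ)
    let Mii := N_ii - 1; let Mie := N_ie
    let Meσ := -(N_ei * G_iᴴ + N_ee * G_eᴴ)
    let Mef := -(N_ei * F_iᴴ + N_ee * F_eᴴ)
    let Mei := N_ei; let Mee := N_ee - 1
    -- first order: eliminate the fast block Y, then the internal block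
    let Yi := toM (Ring.inverse Y)
    let Pσσ := Mσσ - Mσf * Yi * Mfσ
    let Pσi := Mσi - Mσf * Yi * Mfi
    let Pσe := Mσe - Mσf * Yi * Mfe
    let Piσ := Miσ - Mif * Yi * Mfσ
    let Pii := Mii - Mif * Yi * Mfi
    let Pie := Mie - Mif * Yi * Mfe
    let Peσ := Meσ - Mef * Yi * Mfσ
    let Pei := Mei - Mef * Yi * Mfi
    let Pee := Mee - Mef * Yi * Mfe
    let Qσσ := Pσσ - Pσi * Ring.inverse Pii * Piσ
    let Qσe := Pσe - Pσi * Ring.inverse Pii * Pie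
    let Qeσ := Peσ - Pei * Ring.inverse Pii * Piσ
    let Qee := Pee - Pei * Ring.inverse Pii * Pie
    -- second order: eliminate the internal block N_ii − 1, then the fast block
    let Ni := Ring.inverse (N_ii - 1)
    let Rσσ := Mσσ - Mσi * Ni * Miσ
    let Rσf := Mσf - Mσi * Ni * Mif
    let Rσe := Mσe - Mσi * Ni * Mie
    let Rfσ := Mfσ - Mfi * Ni * Miσ
    let Rff := Mff - Mfi * Ni * Mif
    let Rfe := Mfe - Mfi * Ni * Mie
    let Reσ := Meσ - Mei * Ni * Miσ
    let Ref := Mef - Mei * Ni * Mif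
    let Ree := Mee - Mei * Ni * Mie
    let Sσσ := Rσσ - Rσf * Ring.inverse Rff * Rfσ
    let Sσe := Rσe - Rσf * Ring.inverse Rff * Rfe
    let Seσ := Reσ - Ref * Ring.inverse Rff * Rfσ
    let See := Ree - Ref * Ring.inverse Rff * Rfe
    fromBlocks Qσσ Qσe Qeσ Qee = fromBlocks Sσσ Sσe Seσ See := by
  dsimp only
  have hx1 : toM Y * toM (Ring.inverse Y) = (1 : Matrix Unit Unit R) := by
    rw [toM_mul, Ring.mul_inverse_cancel _ hY, toM_one]
  have hx2 : toM (Ring.inverse Y) * toM Y = (1 : Matrix Unit Unit R) := by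
    rw [toM_mul, Ring.inverse_mul_cancel _ hY, toM_one]
  have hw1 : (N_ii - 1) * Ring.inverse (N_ii - 1) = 1 := Ring.mul_inverse_cancel _ hNii
  have hw2 : Ring.inverse (N_ii - 1) * (N_ii - 1) = 1 := Ring.inverse_mul_cancel _ hNii
  have ep : (N_ii - 1) - (-(N_ii * F_iᴴ + N_ie * F_eᴴ)) * toM (Ring.inverse Y) * F_i
      = (N_ii - 1) + (N_ii * F_iᴴ + N_ie * F_eᴴ) * toM (Ring.inverse Y) * F_i := by
    rw [Matrix.neg_mul, Matrix.neg_mul, sub_neg_eq_add]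
  have er : toM Y - F_i * Ring.inverse (N_ii - 1) * (-(N_ii * F_iᴴ + N_ie * F_eᴴ))
      = toM Y + F_i * Ring.inverse (N_ii - 1) * (N_ii * F_iᴴ + N_ie * F_eᴴ) := by
    rw [Matrix.mul_neg, sub_neg_eq_add]
  have hp : IsUnit ((N_ii - 1) -
      (-(N_ii * F_iᴴ + N_ie * F_eᴴ)) * toM (Ring.inverse Y) * F_i) := by rw [ep]; exact hD₁
  have hr : IsUnit (toM Y -
      F_i * Ring.inverse (N_ii - 1) * (-(N_ii * F_iᴴ + N_ie * F_eᴴ))) := by rw [er]; exact hD₂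
  refine fromBlocks_inj.mpr ⟨?_, ?_, ?_, ?_⟩
  · exact schur_key (toM Y) (toM (Ring.inverse Y)) F_i (-(N_ii * F_iᴴ + N_ie * F_eᴴ))
      (N_ii - 1) (Ring.inverse (N_ii - 1)) (toM B) (toM A_sf) G_i (toM A_f)
      (-(N_ii * G_iᴴ + N_ie * G_eᴴ)) hx1 hx2 hw1 hw2 hp hr
  · exact schur_key (toM Y) (toM (Ring.inverse Y)) F_i (-(N_ii * F_iᴴ + N_ie * F_eᴴ))
      (N_ii - 1) (Ring.inverse (N_ii - 1)) G_e (toM A_sf) G_i F_e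
      N_ie hx1 hx2 hw1 hw2 hp hr
  · exact schur_key (toM Y) (toM (Ring.inverse Y)) F_i (-(N_ii * F_iᴴ + N_ie * F_eᴴ))
      (N_ii - 1) (Ring.inverse (N_ii - 1)) (-(N_ei * G_iᴴ + N_ee * G_eᴴ))
      (-(N_ei * F_iᴴ + N_ee * F_eᴴ)) N_ei (toM A_f)
      (-(N_ii * G_iᴴ + N_ie * G_eᴴ)) hx1 hx2 hw1 hw2 hp hr
  · exact schur_key (toM Y) (toM (Ring.inverse Y)) F_i (-(N_ii * F_iᴴ + N_ie * F_eᴴ))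
      (N_ii - 1) (Ring.inverse (N_ii - 1)) (N_ee - 1)
      (-(N_ei * F_iᴴ + N_ee * F_eᴴ)) N_ei F_e
      N_ie hx1 hx2 hw1 hw2 hp hr
end

section
/- Let R be a unital star ring, and let ι and ε be index types. Let p ∈ R satisfy p·p = p and star p = p, set q := 1 − p, and let A, B, Y, Y' ∈ R, G_i, F_i : Matrix Unit ι R, G_e, F_e : Matrix Unit ε R, and N_xy : Matrix x y R for x, y ∈ {ι, ε}. Assume the structural conditions: p·(entry) = 0 for every entry of F_i and F_e; p·Y = Y·p = 0; p·Y' = Y'·p = 0; Y·Y' = Y'·Y = q. Define (for x, y ranging over {i, e}): B̂ := B − p·A·Y'·A; Ĝ_x := G_x − (p·A·Y') • F_x (each entry of F_x multiplied on the left by p·A·Y'); M̂_x := −(N_xi·G_iᴴ + N_xe·G_eᴴ) + (N_xi·F_iᴴ + N_xe·F_eᴴ)·Y'·A (a column over x, where the scalar Y'·A multiplies on the right); N̂_xy := N_xy + (N_xi·F_iᴴ + N_xe·F_eᴴ)·Y'·F_y. Assume further: every entry g of Ĝ_i satisfies p·g·q = 0; every entry of each N̂_xy commutes with p; and D := N̂_ii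 − 1 is invertible. Then, writing ⟨M⟩ for the entrywise compression of a matrix M (each entry x replaced by p·x·p), the following four identities hold: ⟨B̂ − Ĝ_i·D⁻¹·M̂_i⟩ = ⟨B̂⟩ − ⟨Ĝ_i⟩·D⁻¹·⟨M̂_i⟩; ⟨Ĝ_e − Ĝ_i·D⁻¹·N̂_ie⟩ = ⟨Ĝ_e⟩ − ⟨Ĝ_i⟩·D⁻¹·⟨N̂_ie⟩; ⟨M̂_e − N̂_ei·D⁻¹·M̂_i⟩ = ⟨M̂_e⟩ − ⟨N̂_ei⟩·D⁻¹·⟨M̂_i⟩; ⟨N̂_ee − N̂_ei·D⁻¹·N̂_ie⟩ = ⟨N̂_ee⟩ − ⟨N̂_ei⟩·D⁻¹·⟨N̂_ie⟩. -/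
open Matrix

lemma compress_sub {R : Type*} [Ring R] (p : R) {m n : Type*}
    (M N : Matrix m n R) : compress p (M - N) = compress p M - compress p N := by
  ext i j
  simp [compress, mul_sub, sub_mul]

lemma inv_entries_commute {R : Type*} [Ring R] {n : Type*} [Fintype n] [DecidableEq n]
    (p : R) (D : Matrix n n R) (hD : ∀ i j, Commute (D i j) p) (hU : IsUnit D) :
    ∀ i j, Commute (Ring.inverse D i j) p := by
  have hC : D * Matrix.diagonal (fun _ => p) = Matrix.diagonal (fun _ => p) * D := by
    ext i j
    simp [Matrix.mul_diagonal, Matrix.diagonal_mul, (hD i j).eq]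
  have h1 : Ring.inverse D * D = 1 := Ring.inverse_mul_cancel D hU
  have h2 : D * Ring.inverse D = 1 := Ring.mul_inverse_cancel D hU
  have hC' : Ring.inverse D * Matrix.diagonal (fun _ => p) =
      Matrix.diagonal (fun _ => p) * Ring.inverse D := by
    calc Ring.inverse D * Matrix.diagonal (fun _ => p)
        = Ring.inverse D * Matrix.diagonal (fun _ => p) * (D * Ring.inverse D) := by
          rw [h2, mul_one]
      _ = Ring.inverse D * (Matrix.diagonal (fun _ => p) * D) * Ring.inverse D := by
          noncomm_ring
      _ = Ring.inverse D * (D * Matrix.diagonal (fun _ => p)) * Ring.inverse D := by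
          rw [hC]
      _ = (Ring.inverse D * D) * (Matrix.diagonal (fun _ => p) * Ring.inverse D) := by
          noncomm_ring
      _ = Matrix.diagonal (fun _ => p) * Ring.inverse D := by rw [h1, one_mul]
  intro i j
  have := congrFun (congrFun hC' i) j
  simpa [Matrix.mul_diagonal, Matrix.diagonal_mul, Commute, SemiconjBy] using this

lemma compress_schur {R : Type*} [Ring R] (p : R)
    {m n l : Type*} [Fintype n]
    (X : Matrix m n R) (D : Matrix n n R) (Z : Matrix n l R)
    (hX : ∀ i j, p * X i j * (1 - p) = 0)
    (hD : ∀ i j, Commute (D i j) p) :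
    compress p (X * D * Z) = compress p X * D * compress p Z := by
  ext i j
  simp only [compress, Matrix.map_apply, Matrix.mul_apply, Finset.sum_mul,
    Finset.mul_sum]
  refine Finset.sum_congr rfl fun b _ => Finset.sum_congr rfl fun a _ => ?_
  have hpx : p * X i a * p = p * X i a := by
    have h := hX i a
    rw [mul_sub, mul_one, sub_eq_zero] at h
    exact h.symm
  have hdp : D a b * p = p * D a b := (hD a b).eq
  have hkey : p * X i a * D a b = p * X i a * D a b * p := by
    calc p * X i a * D a b = (p * X i a * p) * D a b := by rw [hpx]
      _ = p * X i a * (p * D a b) := by noncomm_ring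
      _ = p * X i a * (D a b * p) := by rw [hdp]
      _ = p * X i a * D a b * p := by noncomm_ring
  calc p * (X i a * D a b * Z b j) * p
      = (p * X i a * D a b) * (Z b j * p) := by noncomm_ring
    _ = (p * X i a * D a b * p) * (Z b j * p) := by conv_lhs => rw [hkey]
    _ = (p * X i a * D a b) * (p * Z b j * p) := by noncomm_ring
    _ = p * X i a * p * D a b * (p * Z b j * p) := by rw [hpx]

/-- The slow-subspace compression `P_s(·)P_s` commutes with the Schur complement
implementing the instantaneous feedback limit after adiabatic elimination (proof of
Lemma 2 of the paper): for the blocks `B̂, Ĝ_x, M̂_x, N̂_xy` of the Schur complement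
`G_E/Y_ff`, under the structural assumptions on the self-adjoint idempotent `p`
and the extra hypotheses `p·Ĝ_i·q = 0`, commutation of the entries of the `N̂` blocks
with `p`, and invertibility of `D = N̂_ii − 1`, compression commutes with the Schur
complement with respect to `D`, blockwise. -/
theorem compression_commutes_with_feedback_schur
    {R : Type*} [Ring R] [StarRing R]
    {ι ε : Type*} [Fintype ι] [DecidableEq ι] [Fintype ε]
    (p A B Y Y' : R)
    (G_i F_i : Matrix Unit ι R) (G_e F_e : Matrix Unit ε R)
    (N_ii : Matrix ι ι R) (N_ie : Matrix ι ε R)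
    (N_ei : Matrix ε ι R) (N_ee : Matrix ε ε R)
    (hp : p * p = p) (hps : star p = p)
    (hFi : ∀ i j, p * F_i i j = 0) (hFe : ∀ i j, p * F_e i j = 0)
    (hpY : p * Y = 0) (hYp : Y * p = 0)
    (hpY' : p * Y' = 0) (hY'p : Y' * p = 0)
    (hYY' : Y * Y' = 1 - p) (hY'Y : Y' * Y = 1 - p) :
    -- the blocks of the Schur complement G_E/Y_ff
    let Bh := B - p * A * Y' * A
    let Ghi := G_i - (p * A * Y') • F_i
    let Ghe := G_e - (p * A * Y') • F_e
    let Mhi := -(N_ii * G_iᴴ + N_ie * G_eᴴ) +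
      (N_ii * F_iᴴ + N_ie * F_eᴴ) * toM (Y' * A)
    let Mhe := -(N_ei * G_iᴴ + N_ee * G_eᴴ) +
      (N_ei * F_iᴴ + N_ee * F_eᴴ) * toM (Y' * A)
    let Nhii := N_ii + (N_ii * F_iᴴ + N_ie * F_eᴴ) * toM Y' * F_i
    let Nhie := N_ie + (N_ii * F_iᴴ + N_ie * F_eᴴ) * toM Y' * F_e
    let Nhei := N_ei + (N_ei * F_iᴴ + N_ee * F_eᴴ) * toM Y' * F_i
    let Nhee := N_ee + (N_ei * F_iᴴ + N_ee * F_eᴴ) * toM Y' * F_e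
    ∀ (hGi : ∀ i j, p * Ghi i j * (1 - p) = 0)
      (hNii : ∀ i j, Commute (Nhii i j) p) (hNie : ∀ i j, Commute (Nhie i j) p)
      (hNei : ∀ i j, Commute (Nhei i j) p) (hNee : ∀ i j, Commute (Nhee i j) p)
      (hD : IsUnit (Nhii - 1)),
    let Di := Ring.inverse (Nhii - 1)
    compress p (toM Bh - Ghi * Di * Mhi) =
        compress p (toM Bh) - compress p Ghi * Di * compress p Mhi ∧
    compress p (Ghe - Ghi * Di * Nhie) =
        compress p Ghe - compress p Ghi * Di * compress p Nhie ∧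
    compress p (Mhe - Nhei * Di * Mhi) =
        compress p Mhe - compress p Nhei * Di * compress p Mhi ∧
    compress p (Nhee - Nhei * Di * Nhie) =
        compress p Nhee - compress p Nhei * Di * compress p Nhie := by
  intro Bh Ghi Ghe Mhi Mhe Nhii Nhie Nhei Nhee hGi hNii hNie hNei hNee hD Di
  have hpq : p * (1 - p) = 0 := by rw [mul_sub, mul_one, hp, sub_self]
  have hD1 : ∀ i j, Commute ((Nhii - 1) i j) p := by
    intro i j
    simp only [Matrix.sub_apply]
    refine (hNii i j).sub_left ?_
    rcases eq_or_ne i j with h | h <;>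
      simp [Matrix.one_apply, h, Commute.one_left, Commute.zero_left]
  have hDi : ∀ i j, Commute (Di i j) p := inv_entries_commute p _ hD1 hD
  have hNei' : ∀ i j, p * Nhei i j * (1 - p) = 0 := by
    intro i j
    calc p * Nhei i j * (1 - p) = Nhei i j * p * (1 - p) := by rw [(hNei i j).eq]
      _ = Nhei i j * (p * (1 - p)) := by rw [mul_assoc]
      _ = 0 := by rw [hpq, mul_zero]
  refine ⟨?_, ?_, ?_, ?_⟩
  · rw [compress_sub, compress_schur p Ghi Di Mhi hGi hDi]
  · rw [compress_sub, compress_schur p Ghi Di Nhie hGi hDi]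
  · rw [compress_sub, compress_schur p Nhei Di Mhi hNei' hDi]
  · rw [compress_sub, compress_schur p Nhei Di Nhie hNei' hDi]
end
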